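/- arXiv:1807.09491 — 2 statements merged into one kernel-verified Lean document; each statement's English description precedes it below -/
import Mathlib

section
/- Let a : ℚ_p^n → ℝ be nonnegative, even, integrable with ∫ a = 1, and set A_j = sup_{‖x‖=p^j} a(x). Then for every ξ with ‖ξ‖ = p^{−N}, N ≥ 0, one has 0 ≤ 1 − â(ξ) ≤ ∑_{j=N+1}^∞ p^{jn} A_j, where â(ξ) = ∫ χ(ξ·x) a(x) d^n x. -/
open MeasureTheory
open scoped ENNReal

/-- The `p`-adic fractional part `{x}_p`. -/
noncomputable def pFract (p : ℕ) [Fact p.Prime] (x : ℚ_[p]) : ℚ :=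
  Classical.epsilon fun r : ℚ =>
    0 ≤ r ∧ r < 1 ∧ (∃ m k : ℕ, r = (m : ℚ) / (p : ℚ) ^ k) ∧ ‖x - (r : ℚ_[p])‖ ≤ 1

/-- The standard additive character `χ(x) = exp(2πi {x}_p)` of `ℚ_p`. -/
noncomputable def padicChar (p : ℕ) [Fact p.Prime] (x : ℚ_[p]) : ℂ :=
  Complex.exp (2 * Real.pi * Complex.I * ((pFract p x : ℚ) : ℂ))

/-!
Since `a ≥ 0` and `∫ a = 1`, `1 - Re â(ξ) = ∫ (1 - Re χ(ξ·x)) a(x) dx` with a nonnegative integrand.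
The character `χ(ξ·x)` is trivial on the ball `‖x‖ ≤ p^N = ‖ξ‖⁻¹`, so only the spheres
`‖x‖ = p^j`, `j > N`, contribute, and the one of radius `p^j` contributes at most
`A_j ∫_{‖x‖ ≤ p^j} (1 - Re χ(ξ·x)) dx`. On a ball of radius `p^j > ‖ξ‖⁻¹` the character integrates
to zero (translating by a point `x₀` of the ball with `ξ·x₀ = p⁻¹` multiplies the integral by
`χ(p⁻¹) ≠ 1`), so this last integral is the volume `p^{jn}` of the ball.
-/

open Metric

section Character
variable {p : ℕ} [Fact p.Prime]

theorem Padic.exists_nat_lt_norm_sub_div_le_one {x : ℚ_[p]} {k : ℕ} (hx : ‖x‖ ≤ (p : ℝ) ^ k) :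
    ∃ m : ℕ, m < p ^ k ∧ ‖x - m / (p : ℚ_[p]) ^ k‖ ≤ 1 := by
  have hy : ‖(p : ℚ_[p]) ^ k * x‖ ≤ 1 := by
    rw [norm_mul, norm_pow, Padic.norm_p, inv_pow]
    exact inv_mul_le_one_of_le₀ hx (by positivity)
  set y : ℤ_[p] := ⟨_, hy⟩
  refine ⟨y.appr k, y.appr_lt k, ?_⟩
  have hm : ‖y - y.appr k‖ ≤ (p : ℝ) ^ (-(k : ℤ)) :=
    (PadicInt.norm_le_pow_iff_mem_span_pow _ _).2 (y.appr_spec k)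
  have hxm : x - (y.appr k : ℚ_[p]) / (p : ℚ_[p]) ^ k
      = ((y - y.appr k : ℤ_[p]) : ℚ_[p]) / (p : ℚ_[p]) ^ k := by
    have hyx : (y : ℚ_[p]) = p ^ k * x := rfl
    have hp : (p : ℚ_[p]) ^ k ≠ 0 :=
      pow_ne_zero _ (Nat.cast_ne_zero.2 (Fact.out : p.Prime).ne_zero)
    rw [PadicInt.coe_sub, PadicInt.coe_natCast, hyx]
    field_simp
  rw [hxm, norm_div, PadicInt.padic_norm_e_of_padicInt, norm_pow, Padic.norm_p, inv_pow,
    div_inv_eq_mul, ← zpow_natCast]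
  calc ‖y - y.appr k‖ * (p : ℝ) ^ (k : ℤ) ≤ (p : ℝ) ^ (-(k : ℤ)) * (p : ℝ) ^ (k : ℤ) := by gcongr
    _ = 1 := by
      rw [← zpow_add₀ (by exact_mod_cast (Fact.out : p.Prime).ne_zero), neg_add_cancel, zpow_zero]

theorem Padic.eq_of_norm_natCast_sub_le {k m m' : ℕ} (hm : m < p ^ k) (hm' : m' < p ^ k)
    (h : ‖(m : ℚ_[p]) - m'‖ ≤ (p : ℝ) ^ (-(k : ℤ))) : m = m' := by
  have hdvd : (p : ℤ) ^ k ∣ (m : ℤ) - m' := by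
    rw [← Padic.norm_int_le_pow_iff_dvd]
    push_cast
    exact h
  have := Int.eq_zero_of_abs_lt_dvd hdvd (by rw [abs_lt, ← Nat.cast_pow]; omega)
  omega

theorem Padic.exists_eq_intCast_of_norm_ratCast_le_one {r : ℚ} {k : ℕ} {t : ℤ}
    (hrt : r * p ^ k = t) (hr : ‖(r : ℚ_[p])‖ ≤ 1) : ∃ z : ℤ, r = z := by
  have hdvd : (p : ℤ) ^ k ∣ t := by
    rw [← Padic.norm_int_le_pow_iff_dvd]
    have : ((t : ℚ) : ℚ_[p]) = r * (p : ℚ_[p]) ^ k := by rw [← hrt]; push_cast; rfl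
    rw [← Rat.cast_intCast, this, norm_mul, norm_pow, Padic.norm_p, inv_pow, zpow_neg,
      zpow_natCast]
    exact mul_le_of_le_one_left (by positivity) hr
  obtain ⟨z, rfl⟩ := hdvd
  refine ⟨z, mul_right_cancel₀ (pow_ne_zero k (Nat.cast_ne_zero.2 (Fact.out : p.Prime).ne_zero)) ?_⟩
  rw [hrt]
  push_cast
  ring

theorem pFract_spec (x : ℚ_[p]) :
    (∃ m k : ℕ, pFract p x = (m : ℚ) / (p : ℚ) ^ k) ∧ ‖x - (pFract p x : ℚ_[p])‖ ≤ 1 := by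
  refine (Classical.epsilon_spec (p := fun r : ℚ => 0 ≤ r ∧ r < 1 ∧
    (∃ m k : ℕ, r = (m : ℚ) / (p : ℚ) ^ k) ∧ ‖x - (r : ℚ_[p])‖ ≤ 1) ?_).2.2
  obtain ⟨k, hk⟩ := pow_unbounded_of_one_lt ‖x‖ (Nat.one_lt_cast.2 (Fact.out : p.Prime).one_lt)
  obtain ⟨m, hm, hxm⟩ := Padic.exists_nat_lt_norm_sub_div_le_one hk.le
  refine ⟨m / p ^ k, by positivity, ?_, ⟨m, k, rfl⟩, by push_cast; exact hxm⟩
  rw [div_lt_one (pow_pos (Nat.cast_pos.2 (Fact.out : p.Prime).pos) k)]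
  exact_mod_cast hm

/-- Any two `r ∈ ℤ[1/p]` with `x - r ∈ ℤ_p` differ by an integer. -/
theorem padicChar_eq_exp {x : ℚ_[p]} {r : ℚ} {k : ℕ} {t : ℤ} (hrt : r * p ^ k = t)
    (hx : ‖x - r‖ ≤ 1) : padicChar p x = Complex.exp (2 * Real.pi * Complex.I * r) := by
  obtain ⟨⟨m, l, hml⟩, hxs⟩ := pFract_spec x
  set s := pFract p x
  have hp : (p : ℚ) ≠ 0 := Nat.cast_ne_zero.2 (Fact.out : p.Prime).ne_zero
  have hint : (s - r) * p ^ (l + k) = (m * p ^ k - t * p ^ l : ℤ) := by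
    have hr : r * p ^ (l + k) = t * p ^ l := by rw [pow_add, mul_left_comm, hrt, mul_comm]
    rw [sub_mul, hr, hml]
    field_simp
    push_cast
    ring
  have hnorm : ‖((s - r : ℚ) : ℚ_[p])‖ ≤ 1 := by
    rw [show ((s - r : ℚ) : ℚ_[p]) = (x - r) + -(x - s) by push_cast; ring]
    exact (IsUltrametricDist.norm_add_le_max _ _).trans (max_le hx (by rwa [norm_neg]))
  obtain ⟨z, hz⟩ := Padic.exists_eq_intCast_of_norm_ratCast_le_one hint hnorm
  rw [padicChar, show (s : ℂ) = r + z by exact_mod_cast (by linarith : s = r + z), mul_add,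
    Complex.exp_add, mul_comm _ (z : ℂ), Complex.exp_int_mul_two_pi_mul_I, mul_one]

theorem padicChar_add (x y : ℚ_[p]) : padicChar p (x + y) = padicChar p x * padicChar p y := by
  obtain ⟨⟨m, k, hm⟩, hx⟩ := pFract_spec x
  obtain ⟨⟨m', k', hm'⟩, hy⟩ := pFract_spec y
  have hp : (p : ℚ) ≠ 0 := Nat.cast_ne_zero.2 (Fact.out : p.Prime).ne_zero
  have hint : (pFract p x + pFract p y) * p ^ (k + k') = (m * p ^ k' + m' * p ^ k : ℤ) := by
    rw [hm, hm']
    field_simp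
    push_cast
    ring
  have hnorm : ‖x + y - ((pFract p x + pFract p y : ℚ) : ℚ_[p])‖ ≤ 1 := by
    rw [show x + y - ((pFract p x + pFract p y : ℚ) : ℚ_[p])
        = (x - pFract p x) + (y - pFract p y) by push_cast; ring]
    exact (IsUltrametricDist.norm_add_le_max _ _).trans (max_le hx hy)
  rw [padicChar_eq_exp hint hnorm, padicChar, padicChar, ← Complex.exp_add]
  push_cast
  ring_nf

theorem padicChar_eq_one {x : ℚ_[p]} (hx : ‖x‖ ≤ 1) : padicChar p x = 1 := by
  simpa using padicChar_eq_exp (r := 0) (k := 0) (t := 0) (by simp) (by simpa using hx)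

theorem padicChar_p_inv_ne_one : padicChar p (p : ℚ_[p])⁻¹ ≠ 1 := by
  have hp := (Fact.out : p.Prime)
  rw [padicChar_eq_exp (r := (p : ℚ)⁻¹) (k := 1) (t := 1) (by simp [hp.ne_zero]) (by simp),
    Rat.cast_inv, Rat.cast_natCast, ← div_eq_mul_inv]
  exact (Complex.isPrimitiveRoot_exp p hp.ne_zero).ne_one hp.one_lt

theorem continuous_padicChar : Continuous (padicChar p) := by
  refine continuous_iff_continuousAt.2 fun x => tendsto_const_nhds.congr' ?_
  filter_upwards [closedBall_mem_nhds x one_pos] with y hy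
  rw [show y = x + (y - x) by abel, padicChar_add,
    padicChar_eq_one (x := y - x) (by rwa [mem_closedBall, dist_eq_norm] at hy), mul_one]

theorem norm_padicChar (x : ℚ_[p]) : ‖padicChar p x‖ = 1 := by
  rw [padicChar, ← Complex.norm_exp_ofReal_mul_I (2 * Real.pi * pFract p x)]
  push_cast
  ring_nf

theorem re_padicChar_le_one (x : ℚ_[p]) : (padicChar p x).re ≤ 1 :=
  (Complex.re_le_norm _).trans (norm_padicChar x).le

end Character

theorem setIntegral_eq_zero_of_add_right_eq_mul {G : Type*} [AddGroup G] [MeasurableSpace G]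
    [MeasurableAdd G] {μ : Measure G} [μ.IsAddRightInvariant] {s : Set G} {g : G}
    (hs : (· + g) ⁻¹' s = s) {f : G → ℂ} {c : ℂ} (hc : c ≠ 1) (hf : ∀ x, f (x + g) = c * f x) :
    ∫ x in s, f x ∂μ = 0 := by
  have h : ∫ x in s, f x ∂μ = c * ∫ x in s, f x ∂μ := by
    conv_lhs => rw [← map_add_right_eq_self μ g, ← MeasurableEquiv.coe_addRight,
      setIntegral_map_equiv]
    simp only [MeasurableEquiv.coe_addRight, hs, hf, integral_const_mul]
  have : (1 - c) * ∫ x in s, f x ∂μ = 0 := by rw [sub_mul, one_mul, ← h, sub_self]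
  exact (mul_eq_zero.1 this).resolve_left (sub_ne_zero.2 hc.symm)

theorem one_sub_re_integral_mul_eq {X : Type*} [MeasurableSpace X] {μ : Measure X} {a : X → ℝ}
    {χ : X → ℂ} (ha : Integrable a μ) (ha_one : ∫ x, a x ∂μ = 1) (hχ : AEStronglyMeasurable χ μ)
    (hχ_le : ∀ x, ‖χ x‖ ≤ 1) :
    1 - (∫ x, χ x * a x ∂μ).re = ∫ x, (1 - (χ x).re) * a x ∂μ := by
  have hχa : Integrable (fun x => χ x * a x) μ := ha.ofReal.bdd_mul hχ (ae_of_all _ hχ_le)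
  have hreχa : Integrable (fun x => (χ x).re * a x) μ :=
    ha.bdd_mul hχ.re (ae_of_all _ fun x => (Complex.abs_re_le_norm _).trans (hχ_le x))
  have hre : (∫ x, χ x * a x ∂μ).re = ∫ x, (χ x).re * a x ∂μ := by
    have h := integral_re hχa
    simp only [RCLike.re_to_complex, Complex.mul_re, Complex.ofReal_re, Complex.ofReal_im,
      mul_zero, sub_zero] at h
    exact h.symm
  simp_rw [hre, sub_mul, one_mul]
  rw [integral_sub ha hreχa, ha_one]

theorem integrable_one_sub_re_mul {X : Type*} [MeasurableSpace X] {μ : Measure X} {a : X → ℝ}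
    {χ : X → ℂ} (ha : Integrable a μ) (hχ : AEStronglyMeasurable χ μ) (hχ_le : ∀ x, ‖χ x‖ ≤ 1) :
    Integrable (fun x => (1 - (χ x).re) * a x) μ :=
  ha.bdd_mul (c := 2) (aestronglyMeasurable_const.sub hχ.re) (ae_of_all _ fun x =>
    (norm_sub_le _ _).trans (by
      rw [norm_one, Real.norm_eq_abs]
      linarith [(Complex.abs_re_le_norm (χ x)).trans (hχ_le x)]))

theorem IsUltrametricDist.preimage_add_right_closedBall_zero {G : Type*}
    [SeminormedAddCommGroup G] [IsUltrametricDist G] {g : G} {r : ℝ} (hg : ‖g‖ ≤ r) :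
    (· + g) ⁻¹' closedBall 0 r = closedBall 0 r := by
  ext x
  simp only [Set.mem_preimage, mem_closedBall_zero_iff]
  refine ⟨fun h => ?_, fun h => (norm_add_le_max x g).trans (max_le h hg)⟩
  simpa using (norm_add_le_max (x + g) (-g)).trans (max_le h (by rwa [norm_neg]))

theorem IsUltrametricDist.norm_sum_mul_le {R ι : Type*} [SeminormedRing R] [IsUltrametricDist R]
    [Fintype ι] (ξ x : ι → R) : ‖∑ i, ξ i * x i‖ ≤ ‖ξ‖ * ‖x‖ :=
  norm_sum_le_of_forall_le_of_nonneg (by positivity) fun i _ =>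
    (norm_mul_le _ _).trans (mul_le_mul (norm_le_pi_norm ξ i) (norm_le_pi_norm x i)
      (norm_nonneg _) (norm_nonneg _))

theorem Pi.exists_norm_apply_eq_norm {ι E : Type*} [Fintype ι] [NormedAddCommGroup E]
    {x : ι → E} (hx : x ≠ 0) : ∃ i, x i ≠ 0 ∧ ‖x i‖ = ‖x‖ := by
  obtain ⟨i₀, -⟩ := Function.ne_iff.1 hx
  have : Nonempty ι := ⟨i₀⟩
  obtain ⟨⟨i, hi : ‖x i‖ = ‖x‖⟩, -⟩ := IsGreatest.pi_norm x
  exact ⟨i, norm_ne_zero_iff.1 (hi ▸ norm_ne_zero_iff.2 hx), hi⟩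

section PadicSpace
variable {p : ℕ} [Fact p.Prime] {ι : Type*} [Fintype ι]

theorem continuous_padicChar_sum_mul (ξ : ι → ℚ_[p]) :
    Continuous fun x : ι → ℚ_[p] => padicChar p (∑ i, ξ i * x i) :=
  continuous_padicChar.comp
    (continuous_finsetSum _ fun i _ => continuous_const.mul (continuous_apply i))

theorem padicChar_sum_mul_eq_one {ξ x : ι → ℚ_[p]} (h : ‖ξ‖ * ‖x‖ ≤ 1) :
    padicChar p (∑ i, ξ i * x i) = 1 :=
  padicChar_eq_one ((IsUltrametricDist.norm_sum_mul_le ξ x).trans h)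

theorem Padic.exists_norm_pi_eq_zpow {x : ι → ℚ_[p]} (hx : x ≠ 0) :
    ∃ m : ℤ, ‖x‖ = (p : ℝ) ^ m := by
  obtain ⟨i, hxi, hi⟩ := Pi.exists_norm_apply_eq_norm hx
  exact ⟨-(x i).valuation, hi ▸ Padic.norm_eq_zpow_neg_valuation hxi⟩

theorem compl_closedBall_subset_iUnion_sphere (N : ℕ) :
    (closedBall (0 : ι → ℚ_[p]) ((p : ℝ) ^ N))ᶜ ⊆ ⋃ k : ℕ, sphere 0 ((p : ℝ) ^ (N + 1 + k)) := by
  intro x hx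
  rw [Set.mem_compl_iff, mem_closedBall_zero_iff, not_le] at hx
  have hx0 : x ≠ 0 := by
    rintro rfl
    rw [norm_zero] at hx
    exact absurd hx (not_lt.2 (by positivity))
  obtain ⟨m, hm⟩ := Padic.exists_norm_pi_eq_zpow hx0
  have hp : (1 : ℝ) < p := Nat.one_lt_cast.2 (Fact.out : p.Prime).one_lt
  rw [hm, ← zpow_natCast, zpow_lt_zpow_iff_right₀ hp] at hx
  refine Set.mem_iUnion.2 ⟨(m - N - 1).toNat, ?_⟩
  rw [mem_sphere_zero_iff_norm, hm, ← zpow_natCast]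
  congr 1
  push_cast
  omega

theorem lintegral_le_tsum_setLIntegral_sphere [MeasurableSpace (ι → ℚ_[p])]
    {μ : Measure (ι → ℚ_[p])} {F : (ι → ℚ_[p]) → ℝ≥0∞} (N : ℕ)
    (hF : ∀ x ∈ closedBall 0 ((p : ℝ) ^ N), F x = 0) :
    ∫⁻ x, F x ∂μ ≤ ∑' k : ℕ, ∫⁻ x in sphere 0 ((p : ℝ) ^ (N + 1 + k)), F x ∂μ :=
  calc ∫⁻ x, F x ∂μ = ∫⁻ x in (closedBall 0 ((p : ℝ) ^ N))ᶜ, F x ∂μ :=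
        (setLIntegral_eq_of_support_subset fun x hx hB => hx (hF x hB)).symm
    _ ≤ ∫⁻ x in ⋃ k : ℕ, sphere 0 ((p : ℝ) ^ (N + 1 + k)), F x ∂μ :=
        lintegral_mono_set (compl_closedBall_subset_iUnion_sphere N)
    _ ≤ _ := lintegral_iUnion_le _ _

theorem closedBall_pow_eq_iUnion_closedBall (k : ℕ) :
    closedBall (0 : ι → ℚ_[p]) ((p : ℝ) ^ k) =
      ⋃ c : ι → Fin (p ^ k), closedBall (fun i => ((c i : ℕ) : ℚ_[p]) / (p : ℚ_[p]) ^ k) 1 := by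
  ext x
  simp only [Set.mem_iUnion, mem_closedBall, dist_eq_norm, sub_zero]
  constructor
  · intro hx
    choose m hm hxm using fun i =>
      Padic.exists_nat_lt_norm_sub_div_le_one ((norm_le_pi_norm x i).trans hx)
    exact ⟨fun i => ⟨m i, hm i⟩, (pi_norm_le_iff_of_nonneg zero_le_one).2 hxm⟩
  · rintro ⟨c, hc⟩
    set t : ι → ℚ_[p] := fun i => ((c i : ℕ) : ℚ_[p]) / (p : ℚ_[p]) ^ k
    have ht : ‖t‖ ≤ (p : ℝ) ^ k := (pi_norm_le_iff_of_nonneg (by positivity)).2 fun i => by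
      rw [norm_div, norm_pow, Padic.norm_p, inv_pow, div_inv_eq_mul]
      exact mul_le_of_le_one_left (by positivity) (by simpa using Padic.norm_int_le_one (c i : ℤ))
    calc ‖x‖ = ‖(x - t) + t‖ := by rw [sub_add_cancel]
      _ ≤ (p : ℝ) ^ k := (IsUltrametricDist.norm_add_le_max _ _).trans (max_le (hc.trans
          (one_le_pow₀ (Nat.one_le_cast.2 (Fact.out : p.Prime).one_le))) ht)

theorem pairwise_disjoint_closedBall_natCast_div_pow (k : ℕ) :
    Pairwise (Function.onFun Disjoint fun c : ι → Fin (p ^ k) =>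
      closedBall (fun i => ((c i : ℕ) : ℚ_[p]) / (p : ℚ_[p]) ^ k) 1) := by
  intro c c' hcc'
  refine (IsUltrametricDist.closedBall_eq_or_disjoint _ _ _).resolve_left fun heq => hcc' ?_
  have h : ‖(fun i => ((c i : ℕ) : ℚ_[p]) / (p : ℚ_[p]) ^ k) -
      fun i => ((c' i : ℕ) : ℚ_[p]) / (p : ℚ_[p]) ^ k‖ ≤ 1 := by
    rw [← dist_eq_norm, ← mem_closedBall, ← heq]
    exact mem_closedBall_self zero_le_one
  funext i
  refine Fin.ext (Padic.eq_of_norm_natCast_sub_le (c i).2 (c' i).2 ?_)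
  have hi := (norm_le_pi_norm _ i).trans h
  rw [Pi.sub_apply, ← sub_div, norm_div, norm_pow, Padic.norm_p, inv_pow, div_inv_eq_mul,
    ← le_div_iff₀ (pow_pos (Nat.cast_pos.2 (Fact.out : p.Prime).pos) k), one_div] at hi
  rwa [zpow_neg, zpow_natCast]

end PadicSpace

section HaarMeasure
variable {p : ℕ} [Fact p.Prime] {ι : Type*} [Fintype ι]
  [MeasurableSpace (ι → ℚ_[p])] [BorelSpace (ι → ℚ_[p])]
  (μ : Measure (ι → ℚ_[p])) [μ.IsAddHaarMeasure]

theorem measure_closedBall_pow (k : ℕ) :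
    μ (closedBall (0 : ι → ℚ_[p]) ((p : ℝ) ^ k)) =
      (p : ℝ≥0∞) ^ (k * Fintype.card ι) * μ (closedBall 0 1) := by
  classical
  rw [closedBall_pow_eq_iUnion_closedBall, measure_iUnion
    (pairwise_disjoint_closedBall_natCast_div_pow k) fun _ => measurableSet_closedBall,
    tsum_fintype]
  simp only [Measure.addHaar_closedBall_center, Finset.sum_const, Finset.card_univ,
    Fintype.card_fun, Fintype.card_fin, nsmul_eq_mul]
  push_cast
  ring

theorem integral_padicChar_sum_mul_closedBall_eq_zero {ξ : ι → ℚ_[p]} {r : ℝ}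
    (hr : (p : ℝ) ≤ r * ‖ξ‖) : ∫ x in closedBall 0 r, padicChar p (∑ i, ξ i * x i) ∂μ = 0 := by
  classical
  have hξ : ξ ≠ 0 := by
    rintro rfl
    rw [norm_zero, mul_zero] at hr
    exact absurd hr (not_le.2 (Nat.cast_pos.2 (Fact.out : p.Prime).pos))
  obtain ⟨i, hξi, hi⟩ := Pi.exists_norm_apply_eq_norm hξ
  set x₀ : ι → ℚ_[p] := Pi.single i ((ξ i)⁻¹ * (p : ℚ_[p])⁻¹)
  have hx₀ : ‖x₀‖ ≤ r := by
    rw [Pi.norm_single, norm_mul, norm_inv, norm_inv, Padic.norm_p, inv_inv, hi,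
      inv_mul_le_iff₀ (norm_pos_iff.2 hξ), mul_comm]
    exact hr
  have hsum : ∑ j, ξ j * x₀ j = (p : ℚ_[p])⁻¹ := by
    rw [Fintype.sum_eq_single i fun j hj => by simp [x₀, hj]]
    simp only [x₀, Pi.single_eq_same]
    exact mul_inv_cancel_left₀ hξi _
  refine setIntegral_eq_zero_of_add_right_eq_mul
    (IsUltrametricDist.preimage_add_right_closedBall_zero hx₀) (padicChar_p_inv_ne_one (p := p))
    fun x => ?_
  simp only [Pi.add_apply, mul_add, Finset.sum_add_distrib, hsum, padicChar_add, mul_comm]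

theorem setLIntegral_one_sub_re_padicChar_closedBall {ξ : ι → ℚ_[p]} {r : ℝ}
    (hr : (p : ℝ) ≤ r * ‖ξ‖) :
    ∫⁻ x in closedBall 0 r, ENNReal.ofReal (1 - (padicChar p (∑ i, ξ i * x i)).re) ∂μ =
      μ (closedBall 0 r) := by
  have hfin : μ (closedBall 0 r) ≠ ∞ := measure_closedBall_lt_top.ne
  have hχ : IntegrableOn (fun x : ι → ℚ_[p] => padicChar p (∑ i, ξ i * x i)) (closedBall 0 r) μ :=
    (continuous_padicChar_sum_mul ξ).continuousOn.integrableOn_compact (isCompact_closedBall 0 r)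
  have hone : IntegrableOn (fun _ => (1 : ℝ)) (closedBall 0 r) μ := integrableOn_const hfin
  have hre : IntegrableOn (fun x : ι → ℚ_[p] => (padicChar p (∑ i, ξ i * x i)).re)
      (closedBall 0 r) μ := hχ.re
  have hreal : ∫ x in closedBall 0 r, 1 - (padicChar p (∑ i, ξ i * x i)).re ∂μ =
      μ.real (closedBall 0 r) := by
    have h := integral_re hχ
    rw [integral_padicChar_sum_mul_closedBall_eq_zero μ hr] at h
    rw [integral_sub hone hre, setIntegral_const]
    simpa using h
  rw [← ofReal_measureReal hfin, ← hreal]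
  exact (ofReal_integral_eq_lintegral_ofReal (hone.sub hre)
    (ae_of_all _ fun x => sub_nonneg.2 (re_padicChar_le_one _))).symm

theorem setLIntegral_sphere_le {ξ : ι → ℚ_[p]} {a : (ι → ℚ_[p]) → ℝ} {M : ℝ≥0∞} {r : ℝ}
    (hr : (p : ℝ) ≤ r * ‖ξ‖) (ha : ∀ x ∈ sphere 0 r, ENNReal.ofReal (a x) ≤ M) :
    ∫⁻ x in sphere 0 r, ENNReal.ofReal ((1 - (padicChar p (∑ i, ξ i * x i)).re) * a x) ∂μ ≤
      μ (closedBall 0 r) * M := by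
  set g : (ι → ℚ_[p]) → ℝ := fun x => 1 - (padicChar p (∑ i, ξ i * x i)).re
  have hgm : Measurable fun x => ENNReal.ofReal (g x) := ENNReal.measurable_ofReal.comp
    (continuous_const.sub (Complex.continuous_re.comp (continuous_padicChar_sum_mul ξ))).measurable
  calc ∫⁻ x in sphere 0 r, ENNReal.ofReal (g x * a x) ∂μ
      = ∫⁻ x in sphere 0 r, ENNReal.ofReal (g x) * ENNReal.ofReal (a x) ∂μ :=
        lintegral_congr fun x => ENNReal.ofReal_mul (sub_nonneg.2 (re_padicChar_le_one _))
    _ ≤ ∫⁻ x in sphere 0 r, ENNReal.ofReal (g x) * M ∂μ :=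
        setLIntegral_mono' isClosed_sphere.measurableSet fun x hx => by gcongr; exact ha x hx
    _ = (∫⁻ x in sphere 0 r, ENNReal.ofReal (g x) ∂μ) * M := lintegral_mul_const M hgm
    _ ≤ (∫⁻ x in closedBall 0 r, ENNReal.ofReal (g x) ∂μ) * M := by
        gcongr
        exact sphere_subset_closedBall
    _ = μ (closedBall 0 r) * M := by rw [setLIntegral_one_sub_re_padicChar_closedBall μ hr]

theorem setLIntegral_sphere_pow_le (hμ : μ (closedBall 0 1) = 1) {ξ : ι → ℚ_[p]} {N j : ℕ}
    (hξ : ‖ξ‖ = (p : ℝ) ^ (-(N : ℤ))) (hj : N < j) {a : (ι → ℚ_[p]) → ℝ} {M : ℝ≥0∞}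
    (ha : ∀ x ∈ sphere 0 ((p : ℝ) ^ j), ENNReal.ofReal (a x) ≤ M) :
    ∫⁻ x in sphere 0 ((p : ℝ) ^ j),
        ENNReal.ofReal ((1 - (padicChar p (∑ i, ξ i * x i)).re) * a x) ∂μ ≤
      (p : ℝ≥0∞) ^ (j * Fintype.card ι) * M := by
  have hp : (1 : ℝ) < p := Nat.one_lt_cast.2 (Fact.out : p.Prime).one_lt
  have hr : (p : ℝ) ≤ (p : ℝ) ^ j * ‖ξ‖ := by
    rw [hξ, zpow_neg, zpow_natCast, ← div_eq_mul_inv, le_div_iff₀ (pow_pos (by linarith) N),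
      ← pow_succ']
    exact pow_le_pow_right₀ hp.le hj
  simpa [measure_closedBall_pow, hμ] using setLIntegral_sphere_le μ hr ha

end HaarMeasure

theorem padic_one_sub_fourier_bound_general (p : ℕ) [Fact p.Prime] (n : ℕ)
    [MeasurableSpace (Fin n → ℚ_[p])] [BorelSpace (Fin n → ℚ_[p])]
    (μ : Measure (Fin n → ℚ_[p])) [μ.IsAddHaarMeasure]
    (hμ : μ {x : Fin n → ℚ_[p] | ‖x‖ ≤ 1} = 1)
    (a : (Fin n → ℚ_[p]) → ℝ) (ha_nonneg : ∀ x, 0 ≤ a x)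
    (ha_int : Integrable a μ)
    (ha_one : ∫ x, a x ∂μ = 1)
    (A : ℤ → ℝ≥0∞)
    (hA : ∀ j : ℤ, A j = ⨆ x ∈ {x : Fin n → ℚ_[p] | ‖x‖ = (p : ℝ) ^ j}, ENNReal.ofReal (a x))
    (ξ : Fin n → ℚ_[p]) (N : ℕ) (hξ : ‖ξ‖ = (p : ℝ) ^ (-(N : ℤ))) :
    0 ≤ 1 - (∫ x, padicChar p (∑ i, ξ i * x i) * (a x : ℂ) ∂μ).re ∧
    ENNReal.ofReal (1 - (∫ x, padicChar p (∑ i, ξ i * x i) * (a x : ℂ) ∂μ).re) ≤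
      ∑' k : ℕ, (p : ℝ≥0∞) ^ (((N : ℤ) + 1 + k) * (n : ℤ)) * A ((N : ℤ) + 1 + k) := by
  have hχ := (continuous_padicChar_sum_mul (p := p) ξ).aestronglyMeasurable (μ := μ)
  have hχ_le (x : Fin n → ℚ_[p]) : ‖padicChar p (∑ i, ξ i * x i)‖ ≤ 1 := (norm_padicChar _).le
  have hg (x : Fin n → ℚ_[p]) : 0 ≤ (1 - (padicChar p (∑ i, ξ i * x i)).re) * a x :=
    mul_nonneg (sub_nonneg.2 (re_padicChar_le_one _)) (ha_nonneg x)
  rw [one_sub_re_integral_mul_eq ha_int ha_one hχ hχ_le]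
  refine ⟨integral_nonneg hg, ?_⟩
  rw [ofReal_integral_eq_lintegral_ofReal (integrable_one_sub_re_mul ha_int hχ hχ_le)
    (ae_of_all _ hg)]
  refine (lintegral_le_tsum_setLIntegral_sphere N fun x hx => ?_).trans
    (ENNReal.tsum_le_tsum fun k => ?_)
  · have hξx : ‖ξ‖ * ‖x‖ ≤ 1 := by
      rw [hξ, zpow_neg, zpow_natCast,
        inv_mul_le_one₀ (pow_pos (Nat.cast_pos.2 (Fact.out : p.Prime).pos) N)]
      exact mem_closedBall_zero_iff.1 hx
    simp [padicChar_sum_mul_eq_one hξx]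
  · have hμ' : μ (closedBall 0 1) = 1 := by
      rw [← hμ]
      exact congrArg μ (Set.ext fun x => mem_closedBall_zero_iff)
    rw [show (N : ℤ) + 1 + k = ((N + 1 + k : ℕ) : ℤ) by push_cast; ring, ← Nat.cast_mul,
      zpow_natCast]
    refine (setLIntegral_sphere_pow_le μ hμ' hξ (by omega) fun x hx => ?_).trans_eq
      (by rw [Fintype.card_fin])
    exact hA _ ▸ le_iSup₂ (f := fun x _ => ENNReal.ofReal (a x)) x
      ((mem_sphere_zero_iff_norm.1 hx).trans (zpow_natCast _ _).symm)

/-- For a nonnegative even probability density `a` on `ℚ_p^n`, with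
`A_j = sup_{‖x‖ = p^j} a(x)`, one has `0 ≤ 1 - â(ξ) ≤ ∑_{j=N+1}^∞ p^{jn} A_j`
for every `ξ` with `‖ξ‖ = p^{-N}`, `N ≥ 0`, where `â(ξ) = ∫ χ(ξ·x) a(x) d^n x`. -/
theorem padic_one_sub_fourier_bound (p : ℕ) [Fact p.Prime] (n : ℕ) (hn : 0 < n)
    [MeasurableSpace (Fin n → ℚ_[p])] [BorelSpace (Fin n → ℚ_[p])]
    (μ : Measure (Fin n → ℚ_[p])) [μ.IsAddHaarMeasure]
    (hμ : μ {x : Fin n → ℚ_[p] | ‖x‖ ≤ 1} = 1)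
    (a : (Fin n → ℚ_[p]) → ℝ) (ha_nonneg : ∀ x, 0 ≤ a x)
    (ha_even : ∀ x, a (-x) = a x) (ha_int : Integrable a μ)
    (ha_one : ∫ x, a x ∂μ = 1)
    (A : ℤ → ℝ≥0∞)
    (hA : ∀ j : ℤ, A j = ⨆ x ∈ {x : Fin n → ℚ_[p] | ‖x‖ = (p : ℝ) ^ j}, ENNReal.ofReal (a x))
    (ξ : Fin n → ℚ_[p]) (N : ℕ) (hξ : ‖ξ‖ = (p : ℝ) ^ (-(N : ℤ))) :
    0 ≤ 1 - (∫ x, padicChar p (∑ i, ξ i * x i) * (a x : ℂ) ∂μ).re ∧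
    ENNReal.ofReal (1 - (∫ x, padicChar p (∑ i, ξ i * x i) * (a x : ℂ) ∂μ).re) ≤
      ∑' k : ℕ, (p : ℝ≥0∞) ^ (((N : ℤ) + 1 + k) * (n : ℤ)) * A ((N : ℤ) + 1 + k) :=
  padic_one_sub_fourier_bound_general p n μ hμ a ha_nonneg ha_int ha_one A hA ξ N hξ
end

section
/- Let f_N be the indicator function of the ball B_N = {x ∈ ℚ_p^n : ‖x‖ ≤ p^N} and L₀f(x) = ∫ a(x−y)[f(y) − f(x)] d^n y with a a probability density on ℚ_p^n. Then −⟨L₀ f_N, f_N⟩_{L²} = Vol(B_N) · ∫_{‖z‖ > p^N} a(z) d^n z. -/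
open MeasureTheory
open scoped ENNReal

/-- For the indicator `f_N` of the ball `B_N = {‖x‖ ≤ p^N}` in `ℚ_p^n` and
`L₀ f(x) = ∫ a(x-y)[f(y) - f(x)] dy` with a probability density `a`,
`-⟨L₀ f_N, f_N⟩ = Vol(B_N) ⬝ ∫_{‖z‖ > p^N} a(z) dz`. -/
theorem padic_dirichlet_form_indicator (p : ℕ) [Fact p.Prime] (n : ℕ) (hn : 0 < n)
    [MeasurableSpace (Fin n → ℚ_[p])] [BorelSpace (Fin n → ℚ_[p])]
    (μ : Measure (Fin n → ℚ_[p])) [μ.IsAddHaarMeasure]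
    (hμ : μ {x : Fin n → ℚ_[p] | ‖x‖ ≤ 1} = 1)
    (a : (Fin n → ℚ_[p]) → ℝ) (ha_nonneg : ∀ x, 0 ≤ a x)
    (ha_even : ∀ x, a (-x) = a x) (ha_int : Integrable a μ)
    (ha_one : ∫ x, a x ∂μ = 1)
    (N : ℤ)
    (fN : (Fin n → ℚ_[p]) → ℝ)
    (hfN : fN = Set.indicator {x : Fin n → ℚ_[p] | ‖x‖ ≤ (p : ℝ) ^ N} (fun _ => (1 : ℝ))) :
    -∫ x, (∫ y, a (x - y) * (fN y - fN x) ∂μ) * fN x ∂μ =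
      (μ {x : Fin n → ℚ_[p] | ‖x‖ ≤ (p : ℝ) ^ N}).toReal *
        ∫ z in {z : Fin n → ℚ_[p] | (p : ℝ) ^ N < ‖z‖}, a z ∂μ := by
  classical
  set B : Set (Fin n → ℚ_[p]) := {x | ‖x‖ ≤ (p : ℝ) ^ N} with hB
  have hBmeas : MeasurableSet B :=
    (isClosed_le continuous_norm continuous_const).measurableSet
  have hBc : {z : Fin n → ℚ_[p] | (p : ℝ) ^ N < ‖z‖} = Bᶜ := by
    ext z; simp [hB, not_le]
  -- ultrametric: difference of two elements of B is in B
  have hsub : ∀ x z : Fin n → ℚ_[p], ‖x‖ ≤ (p : ℝ) ^ N → ‖z‖ ≤ (p : ℝ) ^ N →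
      ‖x - z‖ ≤ (p : ℝ) ^ N := by
    intro x z hx hz
    have h0 : (0 : ℝ) ≤ (p : ℝ) ^ N := le_trans (norm_nonneg x) hx
    rw [pi_norm_le_iff_of_nonneg h0] at *
    intro i
    calc ‖(x - z) i‖ = ‖x i + (-z i)‖ := by simp [sub_eq_add_neg]
      _ ≤ max ‖x i‖ ‖-z i‖ := Padic.nonarchimedean _ _
      _ ≤ (p : ℝ) ^ N := by simp only [norm_neg]; exact max_le (hx i) (hz i)
  have hball : ∀ x ∈ B, ∀ z, x - z ∈ B ↔ z ∈ B := by
    intro x hx z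
    constructor
    · intro h
      have : z = x - (x - z) := by ring
      rw [hB, Set.mem_setOf_eq, this]
      exact hsub _ _ hx h
    · intro h
      exact hsub _ _ hx h
  -- the tail mass
  set c : ℝ := ∫ z in Bᶜ, a z ∂μ with hc
  have hsplit : (∫ z in B, a z ∂μ) + c = 1 := by
    rw [hc, integral_add_compl hBmeas ha_int, ha_one]
  -- inner integral for x ∈ B
  have hinner : ∀ x ∈ B, (∫ y, a (x - y) * (fN y - fN x) ∂μ) = -c := by
    intro x hx
    have hfx : fN x = 1 := by rw [hfN, Set.indicator_of_mem hx]
    have h1 : Integrable (fun y => a (x - y)) μ := ha_int.comp_sub_left x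
    have h2 : Integrable (fun y => a (x - y) * fN y) μ := by
      have : (fun y => a (x - y) * fN y) = B.indicator (fun y => a (x - y)) := by
        funext y
        by_cases hy : y ∈ B
        · rw [hfN, Set.indicator_of_mem hy, Set.indicator_of_mem hy, mul_one]
        · rw [hfN, Set.indicator_of_notMem hy, Set.indicator_of_notMem hy, mul_zero]
      rw [this]
      exact h1.indicator hBmeas
    have step1 : (∫ y, a (x - y) * (fN y - fN x) ∂μ)
        = (∫ y, a (x - y) * fN y ∂μ) - ∫ y, a (x - y) ∂μ := by
      rw [← integral_sub h2 h1]
      congr 1; funext y; rw [hfx]; ring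
    have step2 : (∫ y, a (x - y) ∂μ) = 1 := by
      rw [integral_sub_left_eq_self a μ x, ha_one]
    have step3 : (∫ y, a (x - y) * fN y ∂μ) = ∫ z in B, a z ∂μ := by
      have key : (∫ y, (fun z => a z * fN (x - z)) (x - y) ∂μ)
          = ∫ z, a z * fN (x - z) ∂μ :=
        integral_sub_left_eq_self (fun z => a z * fN (x - z)) μ x
      have lhs_eq : (fun y => (fun z => a z * fN (x - z)) (x - y))
          = fun y => a (x - y) * fN y := by
        funext y; simp
      rw [lhs_eq] at key
      rw [key]
      have : (fun z => a z * fN (x - z)) = B.indicator a := by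
        funext z
        by_cases hz : z ∈ B
        · have hxz : x - z ∈ B := (hball x hx z).2 hz
          rw [hfN, Set.indicator_of_mem hxz, Set.indicator_of_mem hz, mul_one]
        · have hxz : x - z ∉ B := fun h => hz ((hball x hx z).1 h)
          rw [hfN, Set.indicator_of_notMem hxz, Set.indicator_of_notMem hz, mul_zero]
      rw [this, integral_indicator hBmeas]
    rw [step1, step2, step3]
    linarith
  -- outer integrand is an indicator constant
  have houter : (fun x => (∫ y, a (x - y) * (fN y - fN x) ∂μ) * fN x)
      = B.indicator (fun _ => -c) := by
    funext x
    by_cases hx : x ∈ B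
    · rw [hinner x hx, hfN, Set.indicator_of_mem hx, Set.indicator_of_mem hx, mul_one]
    · rw [hfN, Set.indicator_of_notMem hx, Set.indicator_of_notMem hx, mul_zero]
  rw [houter, hBc, integral_indicator_const _ hBmeas]
  show -((μ B).toReal • (-c)) = (μ B).toReal * c
  rw [smul_eq_mul]
  ring
end
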